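/- Let T > 1 and δ ∈ (0, 2/log⁴ T). Let M₁, M₂, …, be independent 1-subgaussian real random variables with zero means; set μ̂ₙ = (1/n)·∑_{s=1}^n M_s. Then P(∃ s ≤ log² T : μ̂ₛ + √((2/s)·log((eT/s)·(log²(T/s) + 1))) − δ ≤ 0) ≤ 16e²·log T / T. -/

import Mathlib

/-!
Write `x = log T`, `S s = ∑ i < s, M i` and `L s = log ((e T / s) (log² (T / s) + 1))`. For `x < 1`
the event is empty and for `x < 6` the bound exceeds one, so let `x ≥ 6`.

Since `exp (t S s)` is a submartingale, splitting the event `∃ s ≤ m, S s ≤ -a` according to the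
first such `s` gives the maximal Hoeffding inequality `P (∃ s ≤ m, S s ≤ -a) ≤ exp (-a² / 2m)`.
Cut `[1, x²]` into blocks `[u, m]` with `m ≤ (1 + 1/q) u`, `q = ⌊x⌋`. As `L` is antitone, on a
block the event forces `S s ≤ -(√(2 u L m) - m δ)`, whose probability is at most
`e³ exp (-L m) ≤ (100/9) e² m / (T x²)`. The block ends grow geometrically, so they sum to at most
`(q + 1)` times the last one, that is to at most `(7/5) x³`, and `(100/9) (7/5) ≤ 16`.
-/

open MeasureTheory ProbabilityTheory Real
open scoped ENNReal

/-- `Z` is 1-subgaussian: `E[exp(λZ − λE[Z])] ≤ exp(λ²/2)` for all `λ ∈ ℝ`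
(with the integrability of the moment generating function). -/
def IsOneSubgaussian {Ω : Type*} [MeasurableSpace Ω] (μ : Measure Ω) (Z : Ω → ℝ) : Prop :=
  Integrable Z μ ∧ ∀ l : ℝ,
    Integrable (fun ω => Real.exp (l * Z ω - l * (∫ ω', Z ω' ∂μ))) μ ∧
    (∫ ω, Real.exp (l * Z ω - l * (∫ ω', Z ω' ∂μ)) ∂μ) ≤ Real.exp (l ^ 2 / 2)

open scoped NNReal

lemma IsOneSubgaussian.hasSubgaussianMGF {Ω : Type*} [MeasurableSpace Ω] {μ : Measure Ω}
    {Z : Ω → ℝ} (h : IsOneSubgaussian μ Z) (hmean : ∫ ω, Z ω ∂μ = 0) :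
    HasSubgaussianMGF Z 1 μ where
  integrable_exp_mul t := by simpa [hmean] using (h.2 t).1
  mgf_le t := by simpa [mgf, hmean] using (h.2 t).2

section Maximal

variable {Ω : Type*} {X : ℕ → Ω → ℝ}

lemma measurable_sum_of_subset {S : Set ℕ} {F : Finset ℕ} (hF : (F : Set ℕ) ⊆ S) :
    Measurable[⨆ i ∈ S, MeasurableSpace.comap (X i) inferInstance] fun ω => ∑ i ∈ F, X i ω :=
  Finset.measurable_sum F fun i hi => (comap_measurable (X i)).mono
    (le_iSup₂ (f := fun j (_ : j ∈ S) => MeasurableSpace.comap (X j) inferInstance) i (hF hi))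
    le_rfl

lemma iSup_comap_Iio_mono :
    Monotone fun s : ℕ => ⨆ i ∈ Set.Iio s, MeasurableSpace.comap (X i) inferInstance :=
  fun _ _ hst => biSup_mono fun _ hi => lt_of_lt_of_le hi hst

-- The `j`-th set is the event that the partial sums first reach `a` at time `j + 1 ≤ m`.
def firstPassage (X : ℕ → Ω → ℝ) (m : ℕ) (a : ℝ) : ℕ → Set Ω :=
  disjointed fun j => {ω | j < m ∧ a ≤ ∑ i ∈ Finset.range (j + 1), X i ω}

lemma firstPassage_subset (m : ℕ) (a : ℝ) (j : ℕ) :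
    firstPassage X m a j ⊆ {ω | j < m ∧ a ≤ ∑ i ∈ Finset.range (j + 1), X i ω} :=
  disjointed_subset _ j

lemma iUnion_firstPassage (m : ℕ) (a : ℝ) :
    ⋃ j, firstPassage X m a j = {ω | ∃ s, 1 ≤ s ∧ s ≤ m ∧ a ≤ ∑ i ∈ Finset.range s, X i ω} := by
  rw [firstPassage, iUnion_disjointed]
  ext ω
  simp only [Set.mem_ofPred_eq, Set.mem_iUnion]
  constructor
  · rintro ⟨j, hj, hs⟩
    exact ⟨j + 1, by omega, hj, hs⟩
  · rintro ⟨s, hs1, hsm, hs⟩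
    exact ⟨s - 1, by omega, by rwa [Nat.sub_add_cancel hs1]⟩

lemma measurableSet_firstPassage (m : ℕ) (a : ℝ) (j : ℕ) :
    MeasurableSet[⨆ i ∈ Set.Iio (j + 1), MeasurableSpace.comap (X i) inferInstance]
      (firstPassage X m a j) := by
  have hF : ∀ k, MeasurableSet[⨆ i ∈ Set.Iio (k + 1), MeasurableSpace.comap (X i) inferInstance]
      {ω | k < m ∧ a ≤ ∑ i ∈ Finset.range (k + 1), X i ω} := fun k => by
    by_cases hk : k < m
    · simpa [hk] using measurableSet_le measurable_const (measurable_sum_of_subset (by simp))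
    · simp [hk]
  rw [firstPassage, disjointed_eq_inter_compl]
  refine (hF j).inter (.biInter (Set.to_countable _) fun k hk => ?_)
  exact iSup_comap_Iio_mono (Nat.succ_le_succ (le_of_lt hk)) _ (hF k).compl

variable [MeasurableSpace Ω] {μ : Measure Ω}

lemma iSup_comap_le (hmeas : ∀ i, Measurable (X i)) (S : Set ℕ) :
    (⨆ i ∈ S, MeasurableSpace.comap (X i) inferInstance) ≤ ‹MeasurableSpace Ω› :=
  iSup₂_le fun i _ => (hmeas i).comap_le

lemma one_le_mgf_of_integral_eq_zero [IsProbabilityMeasure μ] {Y : Ω → ℝ} {t : ℝ}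
    (hY : Integrable Y μ) (hmean : μ[Y] = 0) (hexp : Integrable (fun ω => exp (t * Y ω)) μ) :
    1 ≤ mgf Y μ t :=
  calc 1 = ∫ ω, (1 + t * Y ω) ∂μ := by
        rw [integral_add (integrable_const 1) (hY.const_mul t), integral_const_mul, hmean]
        simp
    _ ≤ mgf Y μ t :=
        integral_mono ((integrable_const 1).add (hY.const_mul t)) hexp fun ω => by
          linarith [add_one_le_exp (t * Y ω)]

variable [IsProbabilityMeasure μ]

lemma setLIntegral_exp_mul_sum_range_le (hmeas : ∀ i, Measurable (X i)) (hindep : iIndepFun X μ)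
    (hint : ∀ i, Integrable (X i) μ) (hmean : ∀ i, μ[X i] = 0) {t : ℝ}
    (hexp : ∀ i, Integrable (fun ω => exp (t * X i ω)) μ) {s m : ℕ} (hsm : s ≤ m) {B : Set Ω}
    (hB : MeasurableSet[⨆ i ∈ Set.Iio s, MeasurableSpace.comap (X i) inferInstance] B) :
    ∫⁻ ω in B, ENNReal.ofReal (exp (t * ∑ i ∈ Finset.range s, X i ω)) ∂μ ≤
      ∫⁻ ω in B, ENNReal.ofReal (exp (t * ∑ i ∈ Finset.range m, X i ω)) ∂μ := by
  set Y : Ω → ℝ := fun ω => ∑ i ∈ Finset.Ico s m, X i ω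
  have hindep' := indep_iSup_of_disjoint (fun i => (hmeas i).comap_le) hindep
    (Set.Iio_disjoint_Ici (le_refl s))
  have hpast : Measurable[⨆ i ∈ Set.Iio s, MeasurableSpace.comap (X i) inferInstance]
      (B.indicator fun ω => ENNReal.ofReal (exp (t * ∑ i ∈ Finset.range s, X i ω))) :=
    (ENNReal.measurable_ofReal.comp (measurable_exp.comp
      ((measurable_sum_of_subset (by simp)).const_mul t))).indicator hB
  have hfuture : Measurable[⨆ i ∈ Set.Ici s, MeasurableSpace.comap (X i) inferInstance]
      fun ω => ENNReal.ofReal (exp (t * Y ω)) :=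
    ENNReal.measurable_ofReal.comp (measurable_exp.comp
      ((measurable_sum_of_subset (by intro i; simp; omega)).const_mul t))
  have hY : Integrable (fun ω => exp (t * Y ω)) μ := by
    simpa [Y] using hindep.integrable_exp_mul_sum hmeas fun i _ => hexp i
  have hone : 1 ≤ ∫⁻ ω, ENNReal.ofReal (exp (t * Y ω)) ∂μ := by
    rw [← ofReal_integral_eq_lintegral_ofReal hY (ae_of_all _ fun ω => (exp_pos _).le)]
    refine ENNReal.one_le_ofReal.mpr (one_le_mgf_of_integral_eq_zero
      (integrable_finsetSum _ fun i _ => hint i) ?_ hY)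
    simp [Y, integral_finsetSum _ fun i _ => hint i, hmean]
  calc ∫⁻ ω in B, ENNReal.ofReal (exp (t * ∑ i ∈ Finset.range s, X i ω)) ∂μ
      ≤ (∫⁻ ω, B.indicator (fun ω => ENNReal.ofReal (exp (t * ∑ i ∈ Finset.range s, X i ω))) ω ∂μ)
          * ∫⁻ ω, ENNReal.ofReal (exp (t * Y ω)) ∂μ := by
        rw [lintegral_indicator (iSup_comap_le hmeas _ B hB)]
        exact le_mul_of_one_le_right' hone
    _ = ∫⁻ ω, B.indicator (fun ω => ENNReal.ofReal (exp (t * ∑ i ∈ Finset.range s, X i ω))) ω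
          * ENNReal.ofReal (exp (t * Y ω)) ∂μ :=
        (lintegral_mul_eq_lintegral_mul_lintegral_of_independent_measurableSpace
          (iSup_comap_le hmeas _) (iSup_comap_le hmeas _) hindep' hpast hfuture).symm
    _ = ∫⁻ ω in B, ENNReal.ofReal (exp (t * ∑ i ∈ Finset.range m, X i ω)) ∂μ := by
        rw [← lintegral_indicator (iSup_comap_le hmeas _ B hB)]
        congr 1 with ω
        by_cases hω : ω ∈ B
        · simp only [Set.indicator_of_mem hω, Y, ← ENNReal.ofReal_mul (exp_pos _).le, ← exp_add,
            ← mul_add, Finset.sum_range_add_sum_Ico _ hsm]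
        · simp [hω]

lemma ofReal_exp_mul_measure_exists_sum_range_ge_le (hmeas : ∀ i, Measurable (X i))
    (hindep : iIndepFun X μ) (hint : ∀ i, Integrable (X i) μ) (hmean : ∀ i, μ[X i] = 0) {t : ℝ}
    (ht : 0 ≤ t) (hexp : ∀ i, Integrable (fun ω => exp (t * X i ω)) μ) (m : ℕ) (a : ℝ) :
    ENNReal.ofReal (exp (t * a)) * μ {ω | ∃ s, 1 ≤ s ∧ s ≤ m ∧ a ≤ ∑ i ∈ Finset.range s, X i ω} ≤
      ∫⁻ ω, ENNReal.ofReal (exp (t * ∑ i ∈ Finset.range m, X i ω)) ∂μ := by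
  rw [← iUnion_firstPassage]
  set D := firstPassage X m a
  have hdisj : Pairwise (Function.onFun Disjoint D) := disjoint_disjointed _
  have hD : ∀ j, MeasurableSet (D j) := fun j =>
    iSup_comap_le hmeas _ _ (measurableSet_firstPassage m a j)
  have hblock : ∀ j, ENNReal.ofReal (exp (t * a)) * μ (D j) ≤
      ∫⁻ ω in D j, ENNReal.ofReal (exp (t * ∑ i ∈ Finset.range m, X i ω)) ∂μ := fun j => by
    by_cases hj : j < m
    · calc ENNReal.ofReal (exp (t * a)) * μ (D j)
          = ∫⁻ ω in D j, ENNReal.ofReal (exp (t * a)) ∂μ := (setLIntegral_const _ _).symm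
        _ ≤ ∫⁻ ω in D j, ENNReal.ofReal (exp (t * ∑ i ∈ Finset.range (j + 1), X i ω)) ∂μ :=
          setLIntegral_mono (by fun_prop) fun ω hω => ENNReal.ofReal_le_ofReal <|
            exp_le_exp.mpr <| mul_le_mul_of_nonneg_left (firstPassage_subset m a j hω).2 ht
        _ ≤ _ := setLIntegral_exp_mul_sum_range_le hmeas hindep hint hmean hexp hj
          (measurableSet_firstPassage m a j)
    · have : D j = ∅ :=
        Set.eq_empty_of_subset_empty fun ω hω => hj (firstPassage_subset m a j hω).1
      simp [this]
  calc ENNReal.ofReal (exp (t * a)) * μ (⋃ j, D j)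
      = ∑' j, ENNReal.ofReal (exp (t * a)) * μ (D j) := by
        rw [measure_iUnion hdisj hD, ENNReal.tsum_mul_left]
    _ ≤ ∑' j, ∫⁻ ω in D j, ENNReal.ofReal (exp (t * ∑ i ∈ Finset.range m, X i ω)) ∂μ :=
        ENNReal.tsum_le_tsum hblock
    _ = ∫⁻ ω in ⋃ j, D j, ENNReal.ofReal (exp (t * ∑ i ∈ Finset.range m, X i ω)) ∂μ :=
        (lintegral_iUnion hD hdisj _).symm
    _ ≤ _ := setLIntegral_le_lintegral _ _

lemma measure_exists_sum_range_ge_le (hmeas : ∀ i, Measurable (X i)) (hindep : iIndepFun X μ)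
    {c : ℝ≥0} (hsub : ∀ i, HasSubgaussianMGF (X i) c μ) (hmean : ∀ i, μ[X i] = 0) (m : ℕ)
    {a : ℝ} (ha : 0 ≤ a) :
    μ {ω | ∃ s, 1 ≤ s ∧ s ≤ m ∧ a ≤ ∑ i ∈ Finset.range s, X i ω} ≤
      ENNReal.ofReal (exp (-a ^ 2 / (2 * m * c))) := by
  set v : ℝ := m * c
  set t := a / v
  have hsum := HasSubgaussianMGF.sum_of_iIndepFun hindep (s := Finset.range m) fun i _ => hsub i
  have hmgf : ∫⁻ ω, ENNReal.ofReal (exp (t * ∑ i ∈ Finset.range m, X i ω)) ∂μ ≤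
      ENNReal.ofReal (exp (v * t ^ 2 / 2)) := by
    rw [← ofReal_integral_eq_lintegral_ofReal (hsum.integrable_exp_mul t)
      (ae_of_all _ fun ω => (exp_pos _).le)]
    refine ENNReal.ofReal_le_ofReal ((hsum.mgf_le t).trans_eq ?_)
    simp [v]
  have hopt : -(t * a) + v * t ^ 2 / 2 = -a ^ 2 / (2 * v) := by
    rcases eq_or_ne v 0 with hv | hv
    · simp [t, hv]
    · simp only [t]
      field_simp
      ring
  calc μ {ω | ∃ s, 1 ≤ s ∧ s ≤ m ∧ a ≤ ∑ i ∈ Finset.range s, X i ω}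
      = ENNReal.ofReal (exp (-(t * a))) * (ENNReal.ofReal (exp (t * a)) *
          μ {ω | ∃ s, 1 ≤ s ∧ s ≤ m ∧ a ≤ ∑ i ∈ Finset.range s, X i ω}) := by
        rw [← mul_assoc, ← ENNReal.ofReal_mul (exp_pos _).le, ← exp_add, neg_add_cancel, exp_zero,
          ENNReal.ofReal_one, one_mul]
    _ ≤ ENNReal.ofReal (exp (-(t * a))) * ENNReal.ofReal (exp (v * t ^ 2 / 2)) := by
        gcongr
        exact (ofReal_exp_mul_measure_exists_sum_range_ge_le hmeas hindep
          (fun i => (hsub i).integrable) hmean (by positivity)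
          (fun i => (hsub i).integrable_exp_mul t) m a).trans hmgf
    _ = ENNReal.ofReal (exp (-a ^ 2 / (2 * m * c))) := by
        rw [← ENNReal.ofReal_mul (exp_pos _).le, ← exp_add, hopt, mul_assoc]

end Maximal

noncomputable def confidenceLog (T r : ℝ) : ℝ :=
  log (exp 1 * T / r * (log (T / r) ^ 2 + 1))

lemma confidenceLog_le_of_le {T r r' : ℝ} (hr : 0 < r) (hrr' : r ≤ r') (hr'T : r' ≤ T) :
    confidenceLog T r' ≤ confidenceLog T r := by
  have hr' : 0 < r' := hr.trans_le hrr'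
  have hT : 0 < T := hr'.trans_le hr'T
  have hlog : 0 ≤ log (T / r') := log_nonneg ((one_le_div hr').mpr hr'T)
  have hlog' : log (T / r') ≤ log (T / r) :=
    log_le_log (by positivity) (div_le_div_of_nonneg_left hT.le hr hrr')
  refine log_le_log (by positivity) (mul_le_mul ?_ ?_ (by positivity) (by positivity))
  · exact div_le_div_of_nonneg_left (by positivity) hr hrr'
  · nlinarith

lemma one_le_confidenceLog {T r : ℝ} (hr : 0 < r) (hrT : r ≤ T) : 1 ≤ confidenceLog T r := by
  have hT : 0 < T := hr.trans_le hrT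
  have hTr : 1 ≤ T / r := (one_le_div hr).mpr hrT
  rw [confidenceLog, le_log_iff_exp_le (by positivity), mul_div_assoc]
  calc exp 1 = exp 1 * 1 * 1 := by ring
    _ ≤ exp 1 * (T / r) * (log (T / r) ^ 2 + 1) := by gcongr; nlinarith [sq_nonneg (log (T / r))]

lemma exp_neg_confidenceLog {T r : ℝ} (hT : 0 < T) (hr : 0 < r) :
    exp (-confidenceLog T r) = r / (exp 1 * T * (log (T / r) ^ 2 + 1)) := by
  rw [exp_neg, confidenceLog, exp_log (by positivity)]
  field_simp

lemma log_le_div_six_add_one {y : ℝ} (hy : 0 < y) : log y ≤ y / 6 + 1 := by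
  have h6 : log 6 ≤ 2 := by
    rw [log_le_iff_le_exp (by norm_num), show (2 : ℝ) = 1 + 1 by norm_num, exp_add]
    nlinarith [exp_one_gt_d9]
  have := log_le_sub_one_of_pos (show 0 < y / 6 by positivity)
  rw [log_div hy.ne' (by norm_num)] at this
  linarith

lemma log_sq_le_div_three_add_two {y : ℝ} (hy : 0 < y) : log (y ^ 2) ≤ y / 3 + 2 := by
  rw [log_pow]
  push_cast
  linarith [log_le_div_six_add_one hy]

lemma confidenceLog_exp_le_two_mul {x r : ℝ} (hx : 6 ≤ x) (hr : 1 ≤ r) (hrx : r ≤ exp x) :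
    confidenceLog (exp x) r ≤ 2 * x := by
  have h1 : confidenceLog (exp x) 1 = 1 + x + log (x ^ 2 + 1) := by
    rw [confidenceLog, div_one, div_one, log_exp, log_mul (by positivity) (by positivity),
      log_mul (by positivity) (by positivity), log_exp, log_exp]
  have h2 : log (x ^ 2 + 1) ≤ log ((x + 1) ^ 2) := log_le_log (by positivity) (by nlinarith)
  have h3 := log_sq_le_div_three_add_two (show 0 < x + 1 by linarith)
  linarith [confidenceLog_le_of_le one_pos hr hrx]

lemma six_fifths_mul_sq_le_exp {x : ℝ} (hx : 6 ≤ x) : 6 / 5 * x ^ 2 ≤ exp x := by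
  have := pow_div_factorial_le_exp x (by linarith) 4
  norm_num [Nat.factorial] at this
  nlinarith [sq_nonneg x, mul_le_mul hx hx (by norm_num) (by linarith)]

lemma exp_neg_confidenceLog_le {x m : ℝ} (hx : 6 ≤ x) (hm : 0 < m) (hmx : m ≤ 6 / 5 * x ^ 2) :
    exp (-confidenceLog (exp x) m) ≤ 100 / 9 * m / (exp 1 * exp x * x ^ 2) := by
  have hlogm : log m ≤ 11 / 30 * x + 2 :=
    calc log m ≤ log ((11 / 10 * x) ^ 2) := log_le_log hm (by nlinarith)
      _ ≤ 11 / 30 * x + 2 := by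
        linarith [log_sq_le_div_three_add_two (show 0 < 11 / 10 * x by linarith)]
  have hlog : 3 / 10 * x ≤ log (exp x / m) := by
    rw [log_div (exp_pos x).ne' hm.ne', log_exp]
    linarith
  rw [exp_neg_confidenceLog (exp_pos x) hm, div_le_div_iff₀ (by positivity) (by positivity)]
  have : 9 / 100 * x ^ 2 ≤ log (exp x / m) ^ 2 + 1 := by nlinarith
  have hpos : 0 < m * (exp 1 * exp x) := by positivity
  nlinarith

lemma exp_le_sixteen_mul_exp_two_mul {x : ℝ} (h1 : 1 ≤ x) (h6 : x ≤ 6) :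
    exp x ≤ 16 * exp 2 * x := by
  have he : exp 2 ≤ 8 := by
    rw [show (2 : ℝ) = 1 + 1 by norm_num, exp_add]
    nlinarith [exp_one_lt_d9, exp_pos 1]
  rw [show exp x = exp (x - 2) * exp 2 by rw [← exp_add]; ring_nf]
  rcases le_total x 4 with h4 | h4
  · have : exp (x - 2) ≤ exp 2 := exp_le_exp.mpr (by linarith)
    nlinarith [exp_pos 2, exp_pos (x - 2)]
  · have : exp (x - 2) ≤ exp 2 * exp 2 := by rw [← exp_add]; exact exp_le_exp.mpr (by linarith)
    nlinarith [exp_pos 2, exp_pos (x - 2)]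

-- On a block `u ≤ s ≤ m`, the deviation `√(2 s L s) - s δ` allowed at `s` is at least this,
-- because `confidenceLog T` is antitone.
noncomputable def blockThreshold (T δ u m : ℝ) : ℝ := √(2 * u * confidenceLog T m) - m * δ

lemma le_neg_blockThreshold {T δ y u s m : ℝ} (hδ : 0 ≤ δ) (hu : 0 < u) (hus : u ≤ s)
    (hsm : s ≤ m) (hmT : m ≤ T) (h : y / s + √(2 / s * confidenceLog T s) - δ ≤ 0) :
    y ≤ -blockThreshold T δ u m := by
  have hs : 0 < s := hu.trans_le hus
  have hLm := one_le_confidenceLog (hs.trans_le hsm) hmT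
  have hL := confidenceLog_le_of_le hs hsm hmT
  have hsqrt : s * √(2 / s * confidenceLog T s) = √(2 * s * confidenceLog T s) := by
    rw [← sqrt_sq hs.le, ← sqrt_mul (sq_nonneg _), sqrt_sq hs.le]
    congr 1
    field_simp
  have hy : y ≤ s * δ - √(2 * s * confidenceLog T s) := by
    rw [← hsqrt, ← mul_sub, ← div_le_iff₀' hs]
    linarith
  have : √(2 * u * confidenceLog T m) ≤ √(2 * s * confidenceLog T s) :=
    sqrt_le_sqrt (by nlinarith)
  rw [blockThreshold]
  nlinarith

lemma le_six_fifths_mul_sq {x q u m : ℝ} (hx : 6 ≤ x) (hq : x - 1 ≤ q) (hux : u ≤ x ^ 2)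
    (hmq : m ≤ u + u / q) : m ≤ 6 / 5 * x ^ 2 := by
  have : u / q ≤ x ^ 2 / 5 := div_le_div₀ (by positivity) hux (by norm_num) (by linarith)
  linarith

section Block

variable {x δ q u m : ℝ} (hx : 6 ≤ x) (hδ0 : 0 ≤ δ) (hδ : δ ≤ 2 / x ^ 4) (hq : x - 1 ≤ q)
  (hu : 1 ≤ u) (hux : u ≤ x ^ 2) (hum : u ≤ m) (hmq : m ≤ u + u / q)
include hx hδ0 hδ hq hu hux hum hmq

lemma blockThreshold_nonneg : 0 ≤ blockThreshold (exp x) δ u m := by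
  have hm := le_six_fifths_mul_sq hx hq hux hmq
  have hL := one_le_confidenceLog (by linarith) (hm.trans (six_fifths_mul_sq_le_exp hx))
  have hR : 1 ≤ √(2 * u * confidenceLog (exp x) m) := one_le_sqrt.mpr (by nlinarith)
  have hδx : δ * x ^ 4 ≤ 2 := by rwa [le_div_iff₀ (by positivity)] at hδ
  have : m * δ ≤ 1 := by nlinarith [mul_le_mul_of_nonneg_right hm hδ0]
  rw [blockThreshold]
  linarith

lemma two_mul_sub_three_le_sq_blockThreshold :
    2 * m * (confidenceLog (exp x) m - 3) ≤ blockThreshold (exp x) δ u m ^ 2 := by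
  rw [blockThreshold]
  set L := confidenceLog (exp x) m
  set R := √(2 * u * L)
  have hm := le_six_fifths_mul_sq hx hq hux hmq
  have hL1 : 1 ≤ L := one_le_confidenceLog (by linarith) (hm.trans (six_fifths_mul_sq_le_exp hx))
  have hL2 : L ≤ 2 * x :=
    confidenceLog_exp_le_two_mul hx (hu.trans hum) (hm.trans (six_fifths_mul_sq_le_exp hx))
  have hR2 : R ^ 2 = 2 * u * L := sq_sqrt (by positivity)
  have hRx : R ≤ 2 * x ^ 2 := by
    rw [sqrt_le_left (by positivity)]
    nlinarith [mul_le_mul hux hL2 (by linarith) (by positivity)]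
  have hδx : δ * x ^ 4 ≤ 2 := by rwa [le_div_iff₀ (by positivity)] at hδ
  have hRδ : R * δ ≤ 3 / 5 := by nlinarith [mul_le_mul_of_nonneg_right hRx hδ0]
  have hmu : x * (m - u) ≤ 6 / 5 * m := by
    have : x * (u / q) ≤ 6 / 5 * m := by
      rw [← mul_div_assoc, div_le_iff₀ (by linarith)]
      nlinarith
    nlinarith
  -- `(R - m δ)² ≥ 2 m L - 2 L (m - u) - 2 m (R δ)`, and the last two terms are at most `24 m / 5`
  -- (as `L ≤ 2 x`) and `6 m / 5`.
  nlinarith [mul_le_mul_of_nonneg_left hRδ (by linarith : (0 : ℝ) ≤ m),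
    mul_le_mul_of_nonneg_right hL2 (by linarith : (0 : ℝ) ≤ m - u)]

lemma exp_neg_sq_blockThreshold_le :
    exp (-blockThreshold (exp x) δ u m ^ 2 / (2 * m)) ≤ 100 / 9 * exp 2 / (exp x * x ^ 2) * m := by
  have hm := le_six_fifths_mul_sq hx hq hux hmq
  have hm0 : 0 < m := by linarith
  calc exp (-blockThreshold (exp x) δ u m ^ 2 / (2 * m))
      ≤ exp (3 + -confidenceLog (exp x) m) := by
        rw [exp_le_exp, div_le_iff₀ (by positivity)]
        linarith [two_mul_sub_three_le_sq_blockThreshold hx hδ0 hδ hq hu hux hum hmq]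
    _ ≤ exp 3 * (100 / 9 * m / (exp 1 * exp x * x ^ 2)) := by
        rw [exp_add]
        gcongr
        exact exp_neg_confidenceLog_le hx hm0 hm
    _ = 100 / 9 * exp 2 / (exp x * x ^ 2) * m := by
        rw [show (3 : ℝ) = 1 + 2 by norm_num, exp_add]
        field_simp

end Block

-- The blocks are `[u, blockEnd q u]`, so successive block starts grow by a factor of about
-- `1 + 1 / q`.
def blockEnd (q u : ℕ) : ℕ := u + u / q

def peelingGrid (q : ℕ) : ℕ → ℕ
  | 0 => 1
  | k + 1 => blockEnd q (peelingGrid q k) + 1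

def numBlocks (q n : ℕ) : ℕ := Nat.findGreatest (fun k => peelingGrid q k ≤ n) n

lemma peelingGrid_strictMono (q : ℕ) : StrictMono (peelingGrid q) :=
  strictMono_nat_of_lt_succ fun _ => Nat.lt_succ_of_le (Nat.le_add_right _ _)

lemma one_le_peelingGrid (q k : ℕ) : 1 ≤ peelingGrid q k :=
  (peelingGrid_strictMono q).monotone (Nat.zero_le k)

lemma peelingGrid_le_of_le_numBlocks {q n k : ℕ} (hn : 1 ≤ n) (hk : k ≤ numBlocks q n) :
    peelingGrid q k ≤ n :=
  ((peelingGrid_strictMono q).monotone hk).trans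
    (Nat.findGreatest_spec (P := fun k => peelingGrid q k ≤ n) (Nat.zero_le n) hn)

lemma exists_le_numBlocks_mem_block {q n s : ℕ} (hs : 1 ≤ s) (hsn : s ≤ n) :
    ∃ k ≤ numBlocks q n, peelingGrid q k ≤ s ∧ s ≤ blockEnd q (peelingGrid q k) := by
  set k := Nat.findGreatest (fun k => peelingGrid q k ≤ s) s
  have hk : peelingGrid q k ≤ s :=
    Nat.findGreatest_spec (P := fun k => peelingGrid q k ≤ s) (Nat.zero_le s) hs
  have hks : k ≤ s := Nat.findGreatest_le s
  refine ⟨k, Nat.le_findGreatest (hks.trans hsn) (hk.trans hsn), hk, ?_⟩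
  suffices s < peelingGrid q (k + 1) by simp only [peelingGrid] at this; omega
  by_contra! h
  exact Nat.findGreatest_is_greatest (Nat.lt_succ_self k)
    (((peelingGrid_strictMono q).id_le (k + 1)).trans h) h

lemma blockEnd_le_add_div (q u : ℕ) : (blockEnd q u : ℝ) ≤ u + u / q := by
  rw [blockEnd, Nat.cast_add]
  gcongr
  exact Nat.cast_div_le

lemma succ_mul_blockEnd_le (q : ℕ) (hq : 1 ≤ q) (k : ℕ) :
    (q + 1) * blockEnd q (peelingGrid q k) ≤ q * blockEnd q (peelingGrid q (k + 1)) := by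
  set b := blockEnd q (peelingGrid q k)
  have hdiv := Nat.lt_mul_div_succ (b + 1) hq
  rw [show blockEnd q (peelingGrid q (k + 1)) = b + 1 + (b + 1) / q from rfl]
  nlinarith

lemma sum_range_blockEnd_le (q : ℕ) (hq : 1 ≤ q) (K : ℕ) :
    ∑ k ∈ Finset.range (K + 1), blockEnd q (peelingGrid q k) ≤
      (q + 1) * blockEnd q (peelingGrid q K) := by
  induction K with
  | zero => simp; nlinarith
  | succ K ih =>
    rw [Finset.sum_range_succ]
    nlinarith [succ_mul_blockEnd_le q hq K]

lemma setOf_exists_subset_biUnion_blocks {Ω : Type*} (S : ℕ → Ω → ℝ) {T δ y : ℝ} (q : ℕ)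
    (hδ : 0 ≤ δ) (hT : ∀ k ≤ numBlocks q ⌊y⌋₊, (blockEnd q (peelingGrid q k) : ℝ) ≤ T) :
    {ω | ∃ s : ℕ, 1 ≤ s ∧ (s : ℝ) ≤ y ∧ S s ω / s + √(2 / s * confidenceLog T s) - δ ≤ 0} ⊆
      ⋃ k ∈ Finset.range (numBlocks q ⌊y⌋₊ + 1),
        {ω | ∃ s, 1 ≤ s ∧ s ≤ blockEnd q (peelingGrid q k) ∧
          S s ω ≤ -blockThreshold T δ (peelingGrid q k) (blockEnd q (peelingGrid q k))} := by
  rintro ω ⟨s, hs1, hsy, hs⟩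
  obtain ⟨k, hk, hUk, hsk⟩ := exists_le_numBlocks_mem_block (q := q) hs1 (Nat.le_floor hsy)
  refine Set.mem_biUnion (Finset.mem_range.2 (Nat.lt_succ_of_le hk)) ⟨s, hs1, hsk, ?_⟩
  exact le_neg_blockThreshold hδ (by exact_mod_cast one_le_peelingGrid q k)
    (by exact_mod_cast hUk) (by exact_mod_cast hsk) (hT k hk) hs

lemma sum_range_blockEnd_floor_le {x : ℝ} (hx : 6 ≤ x) (K : ℕ)
    (hK : (blockEnd ⌊x⌋₊ (peelingGrid ⌊x⌋₊ K) : ℝ) ≤ 6 / 5 * x ^ 2) :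
    ∑ k ∈ Finset.range (K + 1), (blockEnd ⌊x⌋₊ (peelingGrid ⌊x⌋₊ k) : ℝ) ≤ 7 / 5 * x ^ 3 :=
  calc ∑ k ∈ Finset.range (K + 1), (blockEnd ⌊x⌋₊ (peelingGrid ⌊x⌋₊ k) : ℝ)
      ≤ (⌊x⌋₊ + 1) * blockEnd ⌊x⌋₊ (peelingGrid ⌊x⌋₊ K) := by
        exact_mod_cast sum_range_blockEnd_le _ (Nat.le_floor (by norm_num; linarith)) K
    _ ≤ (x + 1) * (6 / 5 * x ^ 2) := by
        gcongr
        exact Nat.floor_le (by linarith)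
    _ ≤ 7 / 5 * x ^ 3 := by nlinarith

theorem measure_exists_mean_add_confidence_le {Ω : Type*} [MeasurableSpace Ω] (μ : Measure Ω)
    {S : ℕ → Ω → ℝ} (hmax : ∀ (m : ℕ) (a : ℝ), 0 ≤ a →
      μ {ω | ∃ s, 1 ≤ s ∧ s ≤ m ∧ S s ω ≤ -a} ≤ ENNReal.ofReal (exp (-a ^ 2 / (2 * m))))
    {T δ : ℝ} (hT0 : 0 < T) (hT : 6 ≤ log T) (hδ0 : 0 ≤ δ) (hδ : δ ≤ 2 / log T ^ 4) :
    μ {ω | ∃ s : ℕ, 1 ≤ s ∧ (s : ℝ) ≤ log T ^ 2 ∧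
        S s ω / s + √(2 / s * confidenceLog T s) - δ ≤ 0} ≤
      ENNReal.ofReal (16 * exp 2 * log T / T) := by
  set x := log T
  have hTx : exp x = T := exp_log hT0
  set q := ⌊x⌋₊
  have hqx : x - 1 ≤ q := by linarith [Nat.lt_floor_add_one x]
  have hn : 1 ≤ ⌊x ^ 2⌋₊ := Nat.le_floor (by push_cast; nlinarith)
  set K := numBlocks q ⌊x ^ 2⌋₊
  set u : ℕ → ℕ := peelingGrid q
  set m : ℕ → ℕ := fun k => blockEnd q (u k)
  have hux : ∀ k ≤ K, (u k : ℝ) ≤ x ^ 2 := fun k hk =>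
    (Nat.cast_le.mpr (peelingGrid_le_of_le_numBlocks hn hk)).trans (Nat.floor_le (by positivity))
  have hm : ∀ k ≤ K, (m k : ℝ) ≤ 6 / 5 * x ^ 2 := fun k hk =>
    le_six_fifths_mul_sq hT hqx (hux k hk) (blockEnd_le_add_div q _)
  have hsum : ∑ k ∈ Finset.range (K + 1), (m k : ℝ) ≤ 7 / 5 * x ^ 3 :=
    sum_range_blockEnd_floor_le hT K (hm K le_rfl)
  have hblock : ∀ k ≤ K, μ {ω | ∃ s, 1 ≤ s ∧ s ≤ m k ∧ S s ω ≤ -blockThreshold T δ (u k) (m k)} ≤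
      ENNReal.ofReal (100 / 9 * exp 2 / (T * x ^ 2) * m k) := fun k hk => by
    have hu : 1 ≤ (u k : ℝ) := by exact_mod_cast one_le_peelingGrid q k
    have hum : (u k : ℝ) ≤ m k := by exact_mod_cast Nat.le_add_right _ _
    have hmq := blockEnd_le_add_div q (u k)
    refine (hmax _ _ (hTx ▸ blockThreshold_nonneg hT hδ0 hδ hqx hu (hux k hk) hum hmq)).trans ?_
    exact ENNReal.ofReal_le_ofReal
      (hTx ▸ exp_neg_sq_blockThreshold_le hT hδ0 hδ hqx hu (hux k hk) hum hmq)
  have hcover := setOf_exists_subset_biUnion_blocks S q hδ0 fun k hk =>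
    hTx ▸ (hm k hk).trans (six_fifths_mul_sq_le_exp hT)
  calc _ ≤ ∑ k ∈ Finset.range (K + 1),
          μ {ω | ∃ s, 1 ≤ s ∧ s ≤ m k ∧ S s ω ≤ -blockThreshold T δ (u k) (m k)} :=
        (measure_mono hcover).trans (measure_biUnion_finset_le _ _)
    _ ≤ ∑ k ∈ Finset.range (K + 1), ENNReal.ofReal (100 / 9 * exp 2 / (T * x ^ 2) * m k) :=
        Finset.sum_le_sum fun k hk => hblock k (Nat.le_of_lt_succ (Finset.mem_range.1 hk))
    _ = ENNReal.ofReal (100 / 9 * exp 2 / (T * x ^ 2) * ∑ k ∈ Finset.range (K + 1), (m k : ℝ)) := by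
        rw [Finset.mul_sum, ENNReal.ofReal_sum_of_nonneg fun k _ => by positivity]
    _ ≤ ENNReal.ofReal (16 * exp 2 * x / T) := by
        refine ENNReal.ofReal_le_ofReal ?_
        calc 100 / 9 * exp 2 / (T * x ^ 2) * ∑ k ∈ Finset.range (K + 1), (m k : ℝ)
            ≤ 100 / 9 * exp 2 / (T * x ^ 2) * (7 / 5 * x ^ 3) := by gcongr
          _ = 140 / 9 * exp 2 * x / T := by field_simp; ring
          _ ≤ 16 * exp 2 * x / T := by gcongr; norm_num

lemma measure_exists_sum_range_le_neg_le {Ω : Type*} [MeasurableSpace Ω] {μ : Measure Ω}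
    [IsProbabilityMeasure μ] {M : ℕ → Ω → ℝ} (hmeas : ∀ i, Measurable (M i))
    (hindep : iIndepFun M μ) (hsub : ∀ i, IsOneSubgaussian μ (M i))
    (hmean : ∀ i, ∫ ω, M i ω ∂μ = 0) (m : ℕ) {a : ℝ} (ha : 0 ≤ a) :
    μ {ω | ∃ s, 1 ≤ s ∧ s ≤ m ∧ ∑ i ∈ Finset.range s, M i ω ≤ -a} ≤
      ENNReal.ofReal (exp (-a ^ 2 / (2 * m))) := by
  have h := measure_exists_sum_range_ge_le (X := fun i => -M i) (fun i => (hmeas i).neg)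
    (hindep.comp (fun _ y => -y) fun _ => measurable_neg)
    (fun i => ((hsub i).hasSubgaussianMGF (hmean i)).neg) (by simp [integral_neg, hmean]) m ha
  simpa [Finset.sum_neg_distrib, le_neg] using h

/-- Let `T > 1`, `δ ∈ (0, 2/log⁴T)`, `M₁, M₂, …` independent 1-subgaussian with zero
means and `μ̂ₙ = (1/n)·∑_{s=1}^n M_s`.  Then
`P(∃ s ≤ log²T : μ̂ₛ + √((2/s)·log((eT/s)·(log²(T/s) + 1))) − δ ≤ 0) ≤ 16e²·log T / T`. -/
theorem stmt5 {Ω : Type*} [MeasurableSpace Ω] (μ : Measure Ω) [IsProbabilityMeasure μ]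
    (M : ℕ → Ω → ℝ) (hmeas : ∀ i, Measurable (M i))
    (hindep : iIndepFun M μ)
    (hsub : ∀ i, IsOneSubgaussian μ (M i))
    (hmean : ∀ i, (∫ ω, M i ω ∂μ) = 0)
    (T : ℝ) (hT : 1 < T)
    (δ : ℝ) (hδ : δ ∈ Set.Ioo (0 : ℝ) (2 / Real.log T ^ 4)) :
    μ {ω | ∃ s : ℕ, 1 ≤ s ∧ (s : ℝ) ≤ Real.log T ^ 2 ∧
        (∑ i ∈ Finset.range s, M i ω) / s
          + Real.sqrt ((2 / s) * Real.log ((Real.exp 1 * T / s)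
            * (Real.log (T / s) ^ 2 + 1))) - δ ≤ 0} ≤
      ENNReal.ofReal (16 * Real.exp 2 * Real.log T / T) := by
  have hT0 : 0 < T := by linarith
  rcases lt_or_ge (log T) 1 with h1 | h1
  · calc _ ≤ μ ∅ := measure_mono ?_
      _ ≤ _ := by simp
    rintro ω ⟨s, hs1, hsT, -⟩
    have : (1 : ℝ) ≤ s := by exact_mod_cast hs1
    nlinarith [log_pos hT]
  rcases lt_or_ge (log T) 6 with h6 | h6
  · refine prob_le_one.trans (ENNReal.one_le_ofReal.mpr ((one_le_div hT0).mpr ?_))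
    simpa [exp_log hT0] using exp_le_sixteen_mul_exp_two_mul h1 h6.le
  exact measure_exists_mean_add_confidence_le μ
    (fun m _ ha => measure_exists_sum_range_le_neg_le hmeas hindep hsub hmean m ha)
    hT0 h6 hδ.1.le hδ.2.le
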